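/- arXiv:2005.03146 — 2 statements merged into one kernel-verified Lean document; each statement's English description precedes it below -/
import Mathlib

section
/- Let 0 < p ≤ 1. For every function f : V(K_4) → ℝ one has Var_p(M_{K_4} f) ≤ (3/4) · Var_p f. Moreover, equality holds for the delta function f = δ_{a_2}, so the best constant C_{K_4,p} := sup{ Var_p(M_{K_4} f)/Var_p f : f : V → ℝ, Var_p f > 0 } equals 3/4 = 1 − 1/4. -/
open scoped Classical

/-- The ball of radius `r` around `e` in the graph metric of `G`
(only vertices reachable from `e` are at finite distance). -/
noncomputable def gball {V : Type*} [Fintype V] (G : SimpleGraph V) (e : V) (r : ℕ) :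
    Finset V :=
  Finset.univ.filter fun m => G.Reachable e m ∧ G.dist e m ≤ r

/-- The centered Hardy–Littlewood maximal function on a finite graph. -/
noncomputable def mxHL {V : Type*} [Fintype V] (G : SimpleGraph V) (f : V → ℝ) (e : V) : ℝ :=
  ⨆ r : ℕ, (1 / ((gball G e r).card : ℝ)) * ∑ m ∈ gball G e r, |f m|

/-- The fractional centered Hardy–Littlewood maximal function on a finite graph. -/
noncomputable def mxFr {V : Type*} [Fintype V] (G : SimpleGraph V) (α : ℝ) (f : V → ℝ)
    (e : V) : ℝ :=
  ⨆ r : ℕ, ((gball G e r).card : ℝ) ^ (α - 1) * ∑ m ∈ gball G e r, |f m|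

/-- The `p`-variation of `f : V → ℝ` with respect to the graph `G`
(vertices at distance `1` are exactly the adjacent ones). -/
noncomputable def vp {V : Type*} [Fintype V] (G : SimpleGraph V) (p : ℝ) (f : V → ℝ) : ℝ :=
  ((1 / 2) * ∑ v : V, ∑ w : V, if G.Adj v w then |f v - f w| ^ p else 0) ^ (1 / p)

/-- The star graph on `Fin n`, with center the vertex with value `0`. -/
def starG (n : ℕ) : SimpleGraph (Fin n) where
  Adj v w := v ≠ w ∧ (v.val = 0 ∨ w.val = 0)
  symm := ⟨fun _ _ h => ⟨h.1.symm, h.2.symm⟩⟩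
  loopless := ⟨fun _ h => h.1 rfl⟩

/-- The `ℓ²` norm of a function on a finite vertex set. -/
noncomputable def nrm2 {V : Type*} [Fintype V] (g : V → ℝ) : ℝ :=
  Real.sqrt (∑ v : V, g v ^ 2)

/-! On `K_4` every ball of positive radius is the whole vertex set, so
`M f = max (|f|, mean |f|)`. Passing from `f` to `|f|` only lowers the variation, which is
invariant under permutations and translations and scales by `σ ^ p` under dilation by `σ ≥ 0`;
so it suffices to compare sorted values `a ≤ b ≤ c ≤ 1` of mean `0` with their positive parts.
Truncation shortens pair differences, and the loss is paid for by the concavity of `t ↦ t ^ p`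
(subadditivity and the tangent-line bound): a difference `D ≤ 1` kept by the truncation costs
only `D ^ p - (3/4 · D) ^ p ≤ 1 - (3/4) ^ p ≤ p / 3`, while a difference `C` matched with a
truncated difference `B ≤ 3/4 · C` gains `(3/4 · C) ^ p - B ^ p ≥ p (3/4 · C - B) / U` whenever
`3/4 · C ≤ U` and `1 ≤ U`. Since `M δ = 1/4 + 3/4 · δ`, the constant `3/4` is attained. -/

section Rpow

variable {p : ℝ}

theorem rpow_le_rpow_add_tangent {x y : ℝ} (hp0 : 0 ≤ p) (hp1 : p ≤ 1) (hx : 0 ≤ x)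
    (hy : 0 < y) : x ^ p ≤ y ^ p + p * y ^ (p - 1) * (x - y) := by
  have hs : -1 ≤ x / y - 1 := by linarith [div_nonneg hx hy.le]
  have hb := rpow_one_add_le_one_add_mul_self hs hp0 hp1
  rw [add_sub_cancel, Real.div_rpow hx hy.le, div_le_iff₀ (by positivity)] at hb
  rw [Real.rpow_sub_one hy.ne']
  calc x ^ p ≤ (1 + p * (x / y - 1)) * y ^ p := hb
    _ = y ^ p + p * (y ^ p / y) * (x - y) := by field_simp

theorem mul_sub_le_mul_rpow_sub_rpow {B C U : ℝ} (hp0 : 0 ≤ p) (hp1 : p ≤ 1) (hB : 0 ≤ B)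
    (hBC : B ≤ C) (hCU : C ≤ U) (hU : 1 ≤ U) : p * (C - B) ≤ U * (C ^ p - B ^ p) := by
  rcases (hB.trans hBC).eq_or_lt with hC | hC
  · obtain rfl : B = 0 := le_antisymm (hC ▸ hBC) hB
    simp [← hC]
  have hpow : U⁻¹ ≤ C ^ (p - 1) := calc
    U⁻¹ = U ^ (-1 : ℝ) := (Real.rpow_neg_one U).symm
    _ ≤ U ^ (p - 1) := Real.rpow_le_rpow_of_exponent_le hU (by linarith)
    _ ≤ C ^ (p - 1) := Real.rpow_le_rpow_of_nonpos hC hCU (by linarith)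
  have htan := rpow_le_rpow_add_tangent hp0 hp1 hB hC
  calc p * (C - B) = U * (U⁻¹ * (p * (C - B))) := by field_simp
    _ ≤ U * (C ^ (p - 1) * (p * (C - B))) := by gcongr
    _ ≤ U * (C ^ p - B ^ p) := by gcongr; linarith

theorem mul_one_sub_rpow_le {C : ℝ} (hp0 : 0 ≤ p) (hp1 : p ≤ 1) (hC0 : 0 < C) (hC1 : C ≤ 1) :
    C * (1 - C ^ p) ≤ p * (1 - C) := by
  have htan := rpow_le_rpow_add_tangent hp0 hp1 zero_le_one hC0
  rw [Real.one_rpow] at htan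
  have hpow : C ^ (p - 1) ≤ C⁻¹ := by
    rw [← Real.rpow_neg_one]
    exact Real.rpow_le_rpow_of_exponent_ge hC0 hC1 (by linarith)
  calc C * (1 - C ^ p) ≤ C * (p * C ^ (p - 1) * (1 - C)) := by gcongr; linarith
    _ ≤ C * (p * C⁻¹ * (1 - C)) := by gcongr
    _ = p * (1 - C) := by field_simp

theorem rpow_sub_three_quarters_rpow_mul_le {D : ℝ} (hp0 : 0 ≤ p) (hp1 : p ≤ 1) (hD0 : 0 ≤ D)
    (hD1 : D ≤ 1) : D ^ p - (3 / 4 : ℝ) ^ p * D ^ p ≤ p / 3 := by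
  have h := mul_one_sub_rpow_le hp0 hp1 (by norm_num : (0 : ℝ) < 3 / 4) (by norm_num)
  have hDp : D ^ p ≤ 1 := Real.rpow_le_one hD0 hD1 hp0
  have hL : (3 / 4 : ℝ) ^ p ≤ 1 := Real.rpow_le_one (by norm_num) (by norm_num) hp0
  nlinarith [Real.rpow_nonneg hD0 p]

theorem rpow_mul_rpow_one_div {c X : ℝ} (hc : 0 ≤ c) (hX : 0 ≤ X) (hp : p ≠ 0) :
    (c ^ p * X) ^ (1 / p) = c * X ^ (1 / p) := by
  rw [Real.mul_rpow (by positivity) hX, ← Real.rpow_mul hc, mul_one_div_cancel hp, Real.rpow_one]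

end Rpow

noncomputable def pairSum (p a b c d : ℝ) : ℝ :=
  (b - a) ^ p + (c - a) ^ p + (d - a) ^ p + (c - b) ^ p + (d - b) ^ p + (d - c) ^ p

section PairSum

variable {p a b c : ℝ}

theorem pairSum_max_zero_le_of_c_nonpos (hp0 : 0 < p) (hp1 : p ≤ 1) (hab : a ≤ b)
    (hbc : b ≤ c) (hc0 : c ≤ 0) (hsum : a + b + c + 1 = 0) :
    pairSum p (max a 0) (max b 0) (max c 0) 1 ≤ (3 / 4 : ℝ) ^ p * pairSum p a b c 1 := by
  have hL : 0 ≤ (3 / 4 : ℝ) ^ p := by positivity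
  have hgain : 1 ≤ (3 / 4 : ℝ) ^ p * (1 - a) ^ p := by
    rw [← Real.mul_rpow (by norm_num) (by linarith)]
    exact Real.one_le_rpow (by linarith) hp0.le
  have hsub_b : (1 - a) ^ p ≤ (1 - b) ^ p + (b - a) ^ p := by
    simpa using Real.rpow_add_le_add_rpow (by linarith : 0 ≤ 1 - b) (by linarith : 0 ≤ b - a)
      hp0.le hp1
  have hsub_c : (1 - a) ^ p ≤ (1 - c) ^ p + (c - a) ^ p := by
    simpa using Real.rpow_add_le_add_rpow (by linarith : 0 ≤ 1 - c) (by linarith : 0 ≤ c - a)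
      hp0.le hp1
  rw [max_eq_right (by linarith), max_eq_right (by linarith), max_eq_right hc0]
  simp only [pairSum, sub_self, sub_zero, Real.zero_rpow hp0.ne', Real.one_rpow]
  linarith [mul_le_mul_of_nonneg_left hsub_b hL, mul_le_mul_of_nonneg_left hsub_c hL,
    mul_nonneg hL (Real.rpow_nonneg (by linarith : 0 ≤ c - b) p)]

theorem pairSum_max_zero_le_of_b_nonpos_of_c_nonneg (hp0 : 0 < p) (hp1 : p ≤ 1) (hab : a ≤ b)
    (hb0 : b ≤ 0) (hc0 : 0 ≤ c) (hc1 : c ≤ 1) (hsum : a + b + c + 1 = 0) :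
    pairSum p (max a 0) (max b 0) (max c 0) 1 ≤ (3 / 4 : ℝ) ^ p * pairSum p a b c 1 := by
  rw [max_eq_right (by linarith), max_eq_right hb0, max_eq_left hc0]
  simp only [pairSum, sub_self, sub_zero, Real.zero_rpow hp0.ne', Real.one_rpow]
  have hL : 0 ≤ (3 / 4 : ℝ) ^ p := by positivity
  have hsub : (c - a) ^ p ≤ (c - b) ^ p + (b - a) ^ p := by
    simpa using Real.rpow_add_le_add_rpow (by linarith : 0 ≤ c - b) (by linarith : 0 ≤ b - a)
      hp0.le hp1
  have hmul_ca : (3 / 4 : ℝ) ^ p * (c - a) ^ p = (3 / 4 * (c - a)) ^ p :=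
    (Real.mul_rpow (by norm_num) (by linarith)).symm
  have hmul_1a : (3 / 4 : ℝ) ^ p * (1 - a) ^ p = (3 / 4 * (1 - a)) ^ p :=
    (Real.mul_rpow (by norm_num) (by linarith)).symm
  have hmul_1b : (3 / 4 : ℝ) ^ p * (1 - b) ^ p = (3 / 4 * (1 - b)) ^ p :=
    (Real.mul_rpow (by norm_num) (by linarith)).symm
  have hgain_c := mul_sub_le_mul_rpow_sub_rpow (U := 9 / 4) hp0.le hp1 hc0
    (by linarith : c ≤ 3 / 4 * (c - a)) (by linarith) (by norm_num)
  have hgain_1 := mul_sub_le_mul_rpow_sub_rpow (U := 9 / 4) hp0.le hp1 zero_le_one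
    (by linarith : 1 ≤ 3 / 4 * (1 - a)) (by linarith) (by norm_num)
  have hloss_c := rpow_sub_three_quarters_rpow_mul_le hp0.le hp1
    (by linarith : 0 ≤ 1 - c) (by linarith)
  have hpsum : p * a + p * b + p * c + p = 0 := by linear_combination p * hsum
  rw [Real.one_rpow] at hgain_1
  rcases le_or_gt b (-1 / 3) with hb | hb
  · have hgain_b : 1 ≤ (3 / 4 * (1 - b)) ^ p := Real.one_le_rpow (by linarith) hp0.le
    linarith [mul_le_mul_of_nonneg_left hsub hL,
      mul_nonneg hp0.le (by linarith : 0 ≤ 5 / 9 + b + 7 / 9 * c)]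
  · have hloss_b := mul_one_sub_rpow_le hp0.le hp1 (by linarith : 0 < 3 / 4 * (1 - b))
      (by linarith)
    have hCp : (3 / 4 * (1 - b)) ^ p ≤ 1 := Real.rpow_le_one (by linarith) (by linarith) hp0.le
    linarith [mul_le_mul_of_nonneg_left hsub hL, mul_nonneg hp0.le hc0,
      mul_le_mul_of_nonneg_right (by linarith : 3 / 4 ≤ 3 / 4 * (1 - b))
        (by linarith : 0 ≤ 1 - (3 / 4 * (1 - b)) ^ p)]

theorem pairSum_max_zero_le_of_b_nonneg (hp0 : 0 < p) (hp1 : p ≤ 1) (hb0 : 0 ≤ b)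
    (hbc : b ≤ c) (hc1 : c ≤ 1) (hsum : a + b + c + 1 = 0) :
    pairSum p (max a 0) (max b 0) (max c 0) 1 ≤ (3 / 4 : ℝ) ^ p * pairSum p a b c 1 := by
  rw [max_eq_right (by linarith), max_eq_left hb0, max_eq_left (hb0.trans hbc)]
  simp only [pairSum, sub_zero, Real.one_rpow]
  have hmul_ba : (3 / 4 : ℝ) ^ p * (b - a) ^ p = (3 / 4 * (b - a)) ^ p :=
    (Real.mul_rpow (by norm_num) (by linarith)).symm
  have hmul_ca : (3 / 4 : ℝ) ^ p * (c - a) ^ p = (3 / 4 * (c - a)) ^ p :=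
    (Real.mul_rpow (by norm_num) (by linarith)).symm
  have hmul_1a : (3 / 4 : ℝ) ^ p * (1 - a) ^ p = (3 / 4 * (1 - a)) ^ p :=
    (Real.mul_rpow (by norm_num) (by linarith)).symm
  -- with a constant bound `U = 3` the gains would fall short of `p` for small `b + c`
  have hgain_b := mul_sub_le_mul_rpow_sub_rpow (U := 3 / 2 * (1 + c)) hp0.le hp1 hb0
    (by linarith : b ≤ 3 / 4 * (b - a)) (by linarith) (by linarith)
  have hgain_c := mul_sub_le_mul_rpow_sub_rpow (U := 3 / 2 * (1 + c)) hp0.le hp1 (hb0.trans hbc)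
    (by linarith : c ≤ 3 / 4 * (c - a)) (by linarith) (by linarith)
  have hgain_1 := mul_sub_le_mul_rpow_sub_rpow (U := 3 / 2 * (1 + c)) hp0.le hp1 zero_le_one
    (by linarith : 1 ≤ 3 / 4 * (1 - a)) (by linarith) (by linarith)
  rw [Real.one_rpow] at hgain_1
  have hgain : p ≤ ((3 / 4 * (b - a)) ^ p - b ^ p) + ((3 / 4 * (c - a)) ^ p - c ^ p)
      + ((3 / 4 * (1 - a)) ^ p - 1) := by
    refine le_of_mul_le_mul_left ?_ (by linarith : (0 : ℝ) < 3 / 2 * (1 + c))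
    have hpsum : p * a + p * b + p * c + p = 0 := by linear_combination p * hsum
    linarith [mul_nonneg hp0.le hb0, mul_nonneg hp0.le (hb0.trans hbc)]
  have hloss_cb := rpow_sub_three_quarters_rpow_mul_le hp0.le hp1
    (by linarith : 0 ≤ c - b) (by linarith)
  have hloss_b := rpow_sub_three_quarters_rpow_mul_le hp0.le hp1
    (by linarith : 0 ≤ 1 - b) (by linarith)
  have hloss_c := rpow_sub_three_quarters_rpow_mul_le hp0.le hp1
    (by linarith : 0 ≤ 1 - c) (by linarith)
  linarith

theorem pairSum_max_zero_le (hp0 : 0 < p) (hp1 : p ≤ 1) (hab : a ≤ b) (hbc : b ≤ c)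
    (hc1 : c ≤ 1) (hsum : a + b + c + 1 = 0) :
    pairSum p (max a 0) (max b 0) (max c 0) 1 ≤ (3 / 4 : ℝ) ^ p * pairSum p a b c 1 := by
  rcases le_or_gt c 0 with hc0 | hc0
  · exact pairSum_max_zero_le_of_c_nonpos hp0 hp1 hab hbc hc0 hsum
  rcases le_or_gt b 0 with hb0 | hb0
  · exact pairSum_max_zero_le_of_b_nonpos_of_c_nonneg hp0 hp1 hab hb0 hc0.le hc1 hsum
  · exact pairSum_max_zero_le_of_b_nonneg hp0 hp1 hb0.le hbc hc1 hsum

end PairSum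

section Variation

variable {V : Type*} [Fintype V]

noncomputable def varSum (G : SimpleGraph V) (p : ℝ) (f : V → ℝ) : ℝ :=
  ∑ v, ∑ w, if G.Adj v w then |f v - f w| ^ p else 0

theorem vp_eq_varSum (G : SimpleGraph V) (p : ℝ) (f : V → ℝ) :
    vp G p f = (1 / 2 * varSum G p f) ^ (1 / p) := rfl

theorem varSum_nonneg (G : SimpleGraph V) (p : ℝ) (f : V → ℝ) : 0 ≤ varSum G p f := by
  unfold varSum
  positivity

theorem varSum_abs_le (G : SimpleGraph V) {p : ℝ} (hp : 0 ≤ p) (f : V → ℝ) :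
    varSum G p (fun v => |f v|) ≤ varSum G p f := by
  unfold varSum
  gcongr with v _ w _
  split_ifs
  · exact Real.rpow_le_rpow (abs_nonneg _) (abs_abs_sub_abs_le_abs_sub _ _) hp
  · rfl

theorem varSum_affine (G : SimpleGraph V) (p : ℝ) (f : V → ℝ) (A : ℝ) {σ : ℝ} (hσ : 0 ≤ σ) :
    varSum G p (fun v => A + σ * f v) = σ ^ p * varSum G p f := by
  simp only [varSum, Finset.mul_sum, mul_ite, mul_zero, add_sub_add_left_eq_sub, ← mul_sub,
    abs_mul, abs_of_nonneg hσ, Real.mul_rpow hσ (abs_nonneg _)]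

theorem vp_affine (G : SimpleGraph V) {p : ℝ} (hp : p ≠ 0) (f : V → ℝ) (A : ℝ) {σ : ℝ}
    (hσ : 0 ≤ σ) : vp G p (fun v => A + σ * f v) = σ * vp G p f := by
  rw [vp_eq_varSum, vp_eq_varSum, varSum_affine G p f A hσ, mul_left_comm,
    rpow_mul_rpow_one_div hσ (by linarith [varSum_nonneg G p f]) hp]

theorem vp_le_mul_of_varSum_le (G : SimpleGraph V) {p c : ℝ} (hp : 0 < p) (hc : 0 ≤ c)
    {f g : V → ℝ} (h : varSum G p g ≤ c ^ p * varSum G p f) : vp G p g ≤ c * vp G p f := by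
  rw [vp_eq_varSum, vp_eq_varSum]
  calc (1 / 2 * varSum G p g) ^ (1 / p)
      ≤ (c ^ p * (1 / 2 * varSum G p f)) ^ (1 / p) :=
        Real.rpow_le_rpow (by linarith [varSum_nonneg G p g]) (by linarith) (by positivity)
    _ = c * (1 / 2 * varSum G p f) ^ (1 / p) :=
        rpow_mul_rpow_one_div hc (by linarith [varSum_nonneg G p f]) hp.ne'

theorem vp_pos_of_adj (G : SimpleGraph V) (p : ℝ) {f : V → ℝ} {v w : V}
    (hadj : G.Adj v w) (hne : f v ≠ f w) : 0 < vp G p f := by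
  have hterm : 0 < |f v - f w| ^ p := Real.rpow_pos_of_pos (abs_pos.2 (sub_ne_zero.2 hne)) p
  have hsum : 0 < varSum G p f := by
    unfold varSum
    refine lt_of_lt_of_le ?_ (Finset.single_le_sum (f := fun v => ∑ w, _)
      (fun v _ => by positivity) (Finset.mem_univ v))
    refine lt_of_lt_of_le ?_ (Finset.single_le_sum (fun w _ => by positivity)
      (Finset.mem_univ w))
    simpa [hadj] using hterm
  rw [vp_eq_varSum]
  positivity

end Variation

section CompleteGraph

variable {V : Type*} [Fintype V]

theorem varSum_top_comp_perm (p : ℝ) (f : V → ℝ) (σ : Equiv.Perm V) :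
    varSum ⊤ p (fun v => f (σ v)) = varSum ⊤ p f := by
  unfold varSum
  conv_rhs => rw [← Equiv.sum_comp σ]
  refine Finset.sum_congr rfl fun v _ => ?_
  conv_rhs => rw [← Equiv.sum_comp σ]
  simp only [SimpleGraph.top_adj, ne_eq, EmbeddingLike.apply_eq_iff_eq]

theorem gball_top_zero (e : V) : gball ⊤ e 0 = {e} := by
  ext m
  simp [gball, SimpleGraph.dist_top, eq_comm]

theorem gball_top_succ (e : V) (r : ℕ) : gball ⊤ e (r + 1) = Finset.univ := by
  ext m
  simp only [gball, SimpleGraph.reachable_top, SimpleGraph.dist_top, true_and,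
    Finset.mem_filter, Finset.mem_univ, iff_true]
  split_ifs <;> omega

theorem mxHL_top (f : V → ℝ) (e : V) :
    mxHL ⊤ f e = max |f e| ((∑ m, |f m|) / Fintype.card V) := by
  have hball : ∀ r : ℕ, (1 / ((gball ⊤ e r).card : ℝ)) * ∑ m ∈ gball ⊤ e r, |f m| =
      if r = 0 then |f e| else (∑ m, |f m|) / Fintype.card V := by
    rintro (_ | r)
    · simp [gball_top_zero]
    · simp [gball_top_succ, div_eq_inv_mul]
  have hle : ∀ r : ℕ, (if r = 0 then |f e| else (∑ m, |f m|) / Fintype.card V) ≤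
      max |f e| ((∑ m, |f m|) / Fintype.card V) := fun r => by
    split_ifs
    exacts [le_max_left _ _, le_max_right _ _]
  have hbdd : BddAbove (Set.range fun r : ℕ =>
      if r = 0 then |f e| else (∑ m, |f m|) / Fintype.card V) :=
    ⟨_, Set.forall_mem_range.2 hle⟩
  simp only [mxHL, hball]
  refine le_antisymm (ciSup_le hle) (max_le ?_ ?_)
  · simpa using le_ciSup hbdd 0
  · simpa using le_ciSup hbdd 1

end CompleteGraph

section FinFour

theorem varSum_top_fin_four (p : ℝ) (x : Fin 4 → ℝ) :
    varSum ⊤ p x = 2 * (|x 1 - x 0| ^ p + |x 2 - x 0| ^ p + |x 3 - x 0| ^ p +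
      |x 2 - x 1| ^ p + |x 3 - x 1| ^ p + |x 3 - x 2| ^ p) := by
  simp only [varSum, SimpleGraph.top_adj, Fin.sum_univ_four]
  simp only [ne_eq, Fin.reduceEq, not_false_eq_true, not_true_eq_false, if_true, if_false]
  rw [abs_sub_comm (x 0) (x 1), abs_sub_comm (x 0) (x 2), abs_sub_comm (x 0) (x 3),
    abs_sub_comm (x 1) (x 2), abs_sub_comm (x 1) (x 3), abs_sub_comm (x 2) (x 3)]
  ring

theorem varSum_top_fin_four_of_monotone (p : ℝ) {x : Fin 4 → ℝ} (hx : Monotone x) :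
    varSum ⊤ p x = 2 * pairSum p (x 0) (x 1) (x 2) (x 3) := by
  have habs : ∀ i j : Fin 4, i ≤ j → |x j - x i| = x j - x i :=
    fun i j hij => abs_of_nonneg (sub_nonneg.2 (hx hij))
  rw [varSum_top_fin_four, pairSum, habs 0 1 (by decide), habs 0 2 (by decide),
    habs 0 3 (by decide), habs 1 2 (by decide), habs 1 3 (by decide), habs 2 3 (by decide)]

variable {p : ℝ}

theorem varSum_top_max_zero_le (hp0 : 0 < p) (hp1 : p ≤ 1) {x : Fin 4 → ℝ} (hx : Monotone x)
    (hsum : ∑ i, x i = 0) (hx3 : x 3 = 1) :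
    varSum ⊤ p (fun i => max (x i) 0) ≤ (3 / 4 : ℝ) ^ p * varSum ⊤ p x := by
  have hmax : Monotone fun i => max (x i) 0 := fun i j hij => max_le_max (hx hij) le_rfl
  rw [varSum_top_fin_four_of_monotone p hmax, varSum_top_fin_four_of_monotone p hx, hx3,
    max_eq_left zero_le_one]
  rw [Fin.sum_univ_four, hx3] at hsum
  have := pairSum_max_zero_le hp0 hp1 (hx (by decide : (0 : Fin 4) ≤ 1))
    (hx (by decide : (1 : Fin 4) ≤ 2)) (hx3 ▸ hx (by decide : (2 : Fin 4) ≤ 3)) hsum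
  linarith

theorem varSum_top_max_mean_le_of_monotone (hp0 : 0 < p) (hp1 : p ≤ 1) {g : Fin 4 → ℝ}
    (hg : Monotone g) :
    varSum ⊤ p (fun i => max (g i) ((∑ j, g j) / 4)) ≤ (3 / 4 : ℝ) ^ p * varSum ⊤ p g := by
  set A := (∑ j, g j) / 4 with hA
  have hgA : ∀ i, g i ≤ g 3 := fun i => hg (Fin.le_last i)
  rcases (show A ≤ g 3 by rw [hA, Fin.sum_univ_four]; linarith [hgA 0, hgA 1, hgA 2]).eq_or_lt
    with hA3 | hA3
  · have hconst : ∀ i, max (g i) A = A := fun i => max_eq_right ((hgA i).trans hA3.ge)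
    simp only [hconst, varSum, sub_self, abs_zero, Real.zero_rpow hp0.ne', ite_self,
      Finset.sum_const_zero]
    exact mul_nonneg (by positivity) (varSum_nonneg _ _ _)
  set σ := g 3 - A with hσ
  have hσ0 : 0 < σ := sub_pos.2 hA3
  set x : Fin 4 → ℝ := fun i => (g i - A) / σ with hx
  have hgx : g = fun i => A + σ * x i := by
    funext i
    simp only [hx]
    field_simp
    ring
  have hmax : (fun i => max (g i) A) = fun i => A + σ * max (x i) 0 := by
    funext i
    rw [mul_max_of_nonneg _ _ hσ0.le, mul_zero, ← max_add_add_left, add_zero, hgx]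
  have hxmono : Monotone x := fun i j hij =>
    div_le_div_of_nonneg_right (sub_le_sub_right (hg hij) A) hσ0.le
  have hxsum : ∑ i, x i = 0 := by
    simp only [hx, ← Finset.sum_div, Finset.sum_sub_distrib, Finset.sum_const, Finset.card_univ,
      Fintype.card_fin, hA]
    ring
  have hx3 : x 3 = 1 := div_self hσ0.ne'
  calc varSum ⊤ p (fun i => max (g i) A) = σ ^ p * varSum ⊤ p (fun i => max (x i) 0) := by
        rw [hmax, varSum_affine _ _ _ _ hσ0.le]
    _ ≤ σ ^ p * ((3 / 4 : ℝ) ^ p * varSum ⊤ p x) := by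
        gcongr
        exact varSum_top_max_zero_le hp0 hp1 hxmono hxsum hx3
    _ = (3 / 4 : ℝ) ^ p * varSum ⊤ p g := by
        conv_rhs => rw [hgx, varSum_affine _ _ _ _ hσ0.le]
        ring

theorem varSum_top_max_mean_le (hp0 : 0 < p) (hp1 : p ≤ 1) (g : Fin 4 → ℝ) :
    varSum ⊤ p (fun i => max (g i) ((∑ j, g j) / 4)) ≤ (3 / 4 : ℝ) ^ p * varSum ⊤ p g := by
  have h := varSum_top_max_mean_le_of_monotone hp0 hp1 (Tuple.monotone_sort g)
  rwa [Function.comp_def, Equiv.sum_comp, varSum_top_comp_perm p (fun i => max (g i) _),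
    varSum_top_comp_perm] at h

theorem vp_mxHL_top_le (hp0 : 0 < p) (hp1 : p ≤ 1) (f : Fin 4 → ℝ) :
    vp ⊤ p (mxHL ⊤ f) ≤ 3 / 4 * vp ⊤ p f := by
  have hM : mxHL ⊤ f = fun i => max |f i| ((∑ j, |f j|) / 4) := by
    funext i
    simp [mxHL_top]
  refine vp_le_mul_of_varSum_le ⊤ hp0 (by norm_num) ?_
  rw [hM]
  exact (varSum_top_max_mean_le hp0 hp1 fun i => |f i|).trans
    (by gcongr; exact varSum_abs_le ⊤ hp0.le f)

theorem mxHL_top_delta : mxHL ⊤ (fun v : Fin 4 => if v = 1 then (1 : ℝ) else 0) =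
    fun v => 1 / 4 + 3 / 4 * (if v = 1 then 1 else 0) := by
  funext v
  have hsum : ∑ j : Fin 4, |if j = 1 then (1 : ℝ) else 0| = 1 := by
    simp [Fin.sum_univ_four]
  rw [mxHL_top, hsum]
  split_ifs <;> norm_num

end FinFour

/-- sharp bound for the `p`-variation of the Hardy–Littlewood maximal
operator on the complete graph `K_4`, for `0 < p ≤ 1`. -/
theorem completeGraphFour_var_sharp (p : ℝ) (hp0 : 0 < p) (hp1 : p ≤ 1) :
    (∀ f : Fin 4 → ℝ,
        vp (⊤ : SimpleGraph (Fin 4)) p (mxHL ⊤ f) ≤ (3 / 4 : ℝ) * vp ⊤ p f) ∧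
    (0 < vp (⊤ : SimpleGraph (Fin 4)) p (fun v => if v = 1 then (1 : ℝ) else 0) ∧
      vp (⊤ : SimpleGraph (Fin 4)) p
          (mxHL ⊤ (fun v => if v = 1 then (1 : ℝ) else 0)) =
        (3 / 4 : ℝ) *
          vp (⊤ : SimpleGraph (Fin 4)) p (fun v => if v = 1 then (1 : ℝ) else 0)) ∧
    sSup {c : ℝ | ∃ f : Fin 4 → ℝ, 0 < vp (⊤ : SimpleGraph (Fin 4)) p f ∧
        c = vp ⊤ p (mxHL ⊤ f) / vp ⊤ p f} = 3 / 4 := by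
  set δ : Fin 4 → ℝ := fun v => if v = 1 then 1 else 0
  have hδpos : 0 < vp ⊤ p δ :=
    vp_pos_of_adj ⊤ p (v := 0) (w := 1) (by simp) (by simp [δ])
  have hδeq : vp ⊤ p (mxHL ⊤ δ) = 3 / 4 * vp ⊤ p δ := by
    rw [mxHL_top_delta, vp_affine ⊤ hp0.ne' δ _ (by norm_num)]
  refine ⟨vp_mxHL_top_le hp0 hp1, ⟨hδpos, hδeq⟩, IsGreatest.csSup_eq ⟨?_, ?_⟩⟩
  · exact ⟨δ, hδpos, by rw [hδeq, mul_div_assoc, div_self hδpos.ne', mul_one]⟩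
  · rintro c ⟨f, hf, rfl⟩
    exact (div_le_iff₀ hf).2 (vp_mxHL_top_le hp0 hp1 f)
end

section
/- Let n ≥ 2 be an integer. For every function f : V(S_n) → ℝ one has Var_1(M_{S_n} f) ≤ (1 − 1/n) · Var_1 f. Moreover, equality holds for the delta function f = δ_{a_2}, so the best constant C_{S_n,1} := sup{ Var_1(M_{S_n} f)/Var_1 f : Var_1 f > 0 } equals 1 − 1/n. -/
open scoped Classical

/-!
On the star, every ball of radius `≥ 2`, and every ball of radius `≥ 1` around the centre, is
the whole vertex set, while a leaf's ball of radius `1` is the leaf and the centre. Writing `aᵢ`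
for `|f|` at the leaves, `b` for `|f|` at the centre and `A` for the mean of `|f|`, the maximal
function is `max b A` at the centre and `max aᵢ ((aᵢ + b) / 2) A` at a leaf, and
`Var₁ g = ∑ᵢ |g(leafᵢ) - g(centre)|`.

With `P`, `Q` the sums of the positive and negative parts of `aᵢ - b` we have `Var₁ |f| = P + Q`
and `n (A - b) = P - Q`. If `A ≤ b`, the `i`-th leaf term is at most `(aᵢ - b)⁺ + (b - A)`;
if `b ≤ A`, it is at most `((aᵢ - b)⁺ - (A - b))⁺`, and these add up to at most
`(P - (A - b))⁺`. Either way the total is at most `(1 - 1/n)(P + Q)` as soon as `n ≥ 2`, and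
the delta at a leaf attains the bound.
-/
lemma sum_posPart_sub_le {ι : Type*} (I : Finset ι) (p : ι → ℝ) (hp : ∀ i ∈ I, 0 ≤ p i)
    {D : ℝ} (hD : 0 ≤ D) : ∑ i ∈ I, (p i - D)⁺ ≤ (∑ i ∈ I, p i - D)⁺ := by
  by_cases h : ∃ j ∈ I, D < p j
  · obtain ⟨j, hj, hDj⟩ := h
    -- only the `j`-th term needs to pay for `D`
    have hrest : ∑ i ∈ I.erase j, (p i - D)⁺ ≤ ∑ i ∈ I.erase j, p i :=
      Finset.sum_le_sum fun i hi => sup_le (by linarith) (hp i (Finset.mem_of_mem_erase hi))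
    rw [← Finset.add_sum_erase I _ hj, ← Finset.add_sum_erase I p hj,
      posPart_eq_self.2 (by linarith : 0 ≤ p j - D)]
    linarith [le_posPart (p j + ∑ i ∈ I.erase j, p i - D)]
  · push Not at h
    rw [Finset.sum_eq_zero fun i hi => posPart_eq_zero.2 (by linarith [h i hi])]
    exact posPart_nonneg _

lemma abs_leafMax_sub_of_le {a b A : ℝ} (hA : A ≤ b) :
    |max a (max ((a + b) / 2) A) - max b A| ≤ (a - b)⁺ + (b - A) := by
  simp only [abs_le, max_def, posPart]
  split_ifs <;> constructor <;> linarith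

lemma abs_leafMax_sub_of_ge {a b A : ℝ} (hA : b ≤ A) :
    |max a (max ((a + b) / 2) A) - max b A| ≤ ((a - b)⁺ - (A - b))⁺ := by
  simp only [abs_le, max_def, posPart]
  split_ifs <;> constructor <;> linarith

lemma sum_abs_leafMax_sub_centerMax_le {ι : Type*} (I : Finset ι) {n : ℕ} (hn : 2 ≤ n)
    (hI : I.card + 1 = n) (a : ι → ℝ) {b A : ℝ} (hA : n * A = b + ∑ i ∈ I, a i) :
    ∑ i ∈ I, |max (a i) (max ((a i + b) / 2) A) - max b A|
      ≤ (1 - 1 / n) * ∑ i ∈ I, |a i - b| := by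
  set P := ∑ i ∈ I, (a i - b)⁺
  set Q := ∑ i ∈ I, (a i - b)⁻
  have hP : 0 ≤ P := Finset.sum_nonneg fun i _ => posPart_nonneg _
  have hQ : 0 ≤ Q := Finset.sum_nonneg fun i _ => negPart_nonneg _
  have hn' : (2 : ℝ) ≤ n := by exact_mod_cast hn
  have hcard : (I.card : ℝ) = n - 1 := by rw [← hI]; push_cast; ring
  have habs : ∑ i ∈ I, |a i - b| = P + Q := by
    simp only [P, Q, ← Finset.sum_add_distrib, posPart_add_negPart]
  have hmean : n * (A - b) = P - Q := by
    have : ∑ i ∈ I, (a i - b) = P - Q := by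
      simp only [P, Q, ← Finset.sum_sub_distrib, posPart_sub_negPart]
    rw [Finset.sum_sub_distrib, Finset.sum_const, nsmul_eq_mul, hcard] at this
    linarith
  rw [habs, one_sub_div (by positivity), div_mul_eq_mul_div, le_div_iff₀ (by positivity)]
  rcases le_total A b with hAb | hbA
  · calc (∑ i ∈ I, |max (a i) (max ((a i + b) / 2) A) - max b A|) * n
        ≤ (∑ i ∈ I, ((a i - b)⁺ + (b - A))) * n := by
          gcongr with i
          exact abs_leafMax_sub_of_le hAb
      _ = (P + (n - 1) * (b - A)) * n := by
          rw [Finset.sum_add_distrib, Finset.sum_const, nsmul_eq_mul, hcard]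
      _ ≤ (n - 1) * (P + Q) := by nlinarith
  · calc (∑ i ∈ I, |max (a i) (max ((a i + b) / 2) A) - max b A|) * n
        ≤ (∑ i ∈ I, ((a i - b)⁺ - (A - b))⁺) * n := by
          gcongr with i
          exact abs_leafMax_sub_of_ge hbA
      _ ≤ (P - (A - b))⁺ * n := by
          gcongr
          exact sum_posPart_sub_le I _ (fun i _ => posPart_nonneg _) (by linarith)
      _ ≤ (n - 1) * (P + Q) := by
          rcases le_total (P - (A - b)) 0 with h | h
          · rw [posPart_eq_zero.2 h]; nlinarith
          · rw [posPart_eq_self.2 h]; nlinarith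

lemma gball_zero {V : Type*} [Fintype V] (G : SimpleGraph V) (e : V) : gball G e 0 = {e} := by
  ext m
  simp only [gball, Finset.mem_filter, Finset.mem_univ, true_and, Finset.mem_singleton,
    Nat.le_zero]
  exact ⟨fun ⟨hr, hd⟩ => (hr.dist_eq_zero_iff.mp hd).symm,
    by rintro rfl; exact ⟨.refl _, SimpleGraph.dist_self⟩⟩

lemma ciSup_nat_eq_max_of_eq_two_le {g : ℕ → ℝ} (h : ∀ r, 2 ≤ r → g r = g 2) :
    ⨆ r, g r = max (g 0) (max (g 1) (g 2)) := by
  have hle : ∀ r, g r ≤ max (g 0) (max (g 1) (g 2)) := fun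
    | 0 => le_max_left _ _
    | 1 => le_max_of_le_right (le_max_left _ _)
    | r + 2 => h (r + 2) (by omega) ▸ le_max_of_le_right (le_max_right _ _)
  have hbdd : BddAbove (Set.range g) := ⟨_, Set.forall_mem_range.2 hle⟩
  exact le_antisymm (ciSup_le hle)
    (max_le (le_ciSup hbdd 0) (max_le (le_ciSup hbdd 1) (le_ciSup hbdd 2)))

section starG

variable {n : ℕ} {c : Fin n}

lemma starG_adj_iff (hc : c.val = 0) {v w : Fin n} :
    (starG n).Adj v w ↔ v ≠ w ∧ (v = c ∨ w = c) := by
  simp only [starG, ← hc, Fin.val_inj]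

lemma starG_dist_center (hc : c.val = 0) {v : Fin n} (hv : v ≠ c) : (starG n).dist c v = 1 :=
  SimpleGraph.dist_eq_one_iff_adj.2 <| (starG_adj_iff hc).2 ⟨hv.symm, .inl rfl⟩

lemma starG_reachable (v w : Fin n) : (starG n).Reachable v w := by
  have hcenter : ∀ u : Fin n, (starG n).Reachable ⟨0, v.pos⟩ u := fun u => by
    rcases eq_or_ne ⟨0, v.pos⟩ u with rfl | hu
    · rfl
    · exact SimpleGraph.Adj.reachable ⟨hu, .inl rfl⟩
  exact (hcenter v).symm.trans (hcenter w)

lemma starG_dist_center_le_one (hc : c.val = 0) (v : Fin n) : (starG n).dist c v ≤ 1 := by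
  rcases eq_or_ne v c with rfl | hv
  · simp
  · exact (starG_dist_center hc hv).le

lemma starG_dist_le_two (v w : Fin n) : (starG n).dist v w ≤ 2 := by
  have : Nonempty (Fin n) := ⟨v⟩
  set c : Fin n := ⟨0, v.pos⟩
  calc (starG n).dist v w ≤ (starG n).dist v c + (starG n).dist c w :=
        SimpleGraph.Connected.dist_triangle ⟨starG_reachable⟩
    _ ≤ 2 := by
        rw [SimpleGraph.dist_comm]
        linarith [starG_dist_center_le_one (c := c) rfl v, starG_dist_center_le_one (c := c) rfl w]

lemma gball_starG_of_two_le (e : Fin n) {r : ℕ} (hr : 2 ≤ r) :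
    gball (starG n) e r = Finset.univ :=
  Finset.eq_univ_of_forall fun m => by
    simpa [gball, starG_reachable e m] using (starG_dist_le_two e m).trans hr

lemma gball_starG_center (hc : c.val = 0) {r : ℕ} (hr : 1 ≤ r) :
    gball (starG n) c r = Finset.univ :=
  Finset.eq_univ_of_forall fun m => by
    simpa [gball, starG_reachable c m] using (starG_dist_center_le_one hc m).trans hr

lemma gball_starG_leaf_one (hc : c.val = 0) {v : Fin n} (hv : v ≠ c) :
    gball (starG n) v 1 = {v, c} := by
  ext m
  simp only [gball, Finset.mem_filter, Finset.mem_univ, true_and, Finset.mem_insert,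
    Finset.mem_singleton, starG_reachable v m, Nat.le_one_iff_eq_zero_or_eq_one,
    (starG_reachable v m).dist_eq_zero_iff, SimpleGraph.dist_eq_one_iff_adj, starG_adj_iff hc]
  tauto

lemma vp_starG_one (hc : c.val = 0) (f : Fin n → ℝ) :
    vp (starG n) 1 f = ∑ v ∈ Finset.univ.erase c, |f v - f c| := by
  have hrow : ∀ v : Fin n, (∑ w, if (starG n).Adj v w then |f v - f w| ^ (1 : ℝ) else 0) =
      if v = c then ∑ w ∈ Finset.univ.erase c, |f w - f c| else |f v - f c| := by
    intro v
    split_ifs with hv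
    · subst hv
      rw [← Finset.sum_filter]
      refine Finset.sum_congr ?_ fun w _ => by rw [Real.rpow_one, abs_sub_comm]
      ext w; simp [starG_adj_iff hc, eq_comm]
    · rw [Finset.sum_eq_single c]
      · simp [starG_adj_iff hc, hv]
      · intro w _ hw; simp [starG_adj_iff hc, hv, hw]
      · simp
  rw [vp, Finset.sum_congr rfl fun v _ => hrow v,
    ← Finset.add_sum_erase _ _ (Finset.mem_univ c), if_pos rfl,
    Finset.sum_congr rfl fun v hv => if_neg (Finset.ne_of_mem_erase hv), div_one, Real.rpow_one]
  ring

lemma mxHL_starG_center (hc : c.val = 0) (f : Fin n → ℝ) :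
    mxHL (starG n) f c = max |f c| ((∑ m, |f m|) / n) := by
  rw [mxHL, ciSup_nat_eq_max_of_eq_two_le fun r hr => ?_]
  · rw [gball_zero, gball_starG_center hc le_rfl, gball_starG_center hc one_le_two]
    simp [inv_mul_eq_div]
  · rw [gball_starG_of_two_le c hr, gball_starG_of_two_le c le_rfl]

lemma mxHL_starG_leaf (hc : c.val = 0) (f : Fin n → ℝ) {v : Fin n} (hv : v ≠ c) :
    mxHL (starG n) f v = max |f v| (max ((|f v| + |f c|) / 2) ((∑ m, |f m|) / n)) := by
  rw [mxHL, ciSup_nat_eq_max_of_eq_two_le fun r hr => ?_]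
  · rw [gball_zero, gball_starG_leaf_one hc hv, gball_starG_of_two_le v le_rfl,
      Finset.card_pair hv, Finset.sum_pair hv]
    simp [inv_mul_eq_div]
  · rw [gball_starG_of_two_le v hr, gball_starG_of_two_le v le_rfl]

lemma sum_abs_delta (e : Fin n) : ∑ m, |if m = e then (1 : ℝ) else 0| = 1 := by
  simp [apply_ite abs]

lemma vp_starG_one_delta {e : Fin n} (hc : c.val = 0) (he : e ≠ c) :
    vp (starG n) 1 (fun v => if v = e then (1 : ℝ) else 0) = 1 := by
  rw [vp_starG_one hc, Finset.sum_eq_single_of_mem e (by simpa using he)]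
  · simp [he.symm]
  · intro v _ hv; simp [hv, he.symm]

lemma vp_starG_one_mxHL_delta {e : Fin n} (hc : c.val = 0) (he : e ≠ c) :
    vp (starG n) 1 (mxHL (starG n) (fun v => if v = e then (1 : ℝ) else 0)) = 1 - 1 / n := by
  have hn : (1 : ℝ) ≤ n := by exact_mod_cast e.pos
  rw [vp_starG_one hc, Finset.sum_eq_single_of_mem e (by simpa using he)]
  · rw [mxHL_starG_leaf hc _ he, mxHL_starG_center hc, sum_abs_delta]
    have hinv : (n : ℝ)⁻¹ ≤ 1 := inv_le_one_of_one_le₀ hn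
    simp only [he.symm, ↓reduceIte, abs_one, abs_zero, add_zero, one_div]
    rw [max_eq_left (max_le (by norm_num) hinv), max_eq_right (by positivity),
      abs_of_nonneg (by linarith)]
  · intro v hvc hv
    rw [mxHL_starG_leaf hc _ (Finset.ne_of_mem_erase hvc), mxHL_starG_center hc, sum_abs_delta]
    simp [hv, he.symm]

theorem vp_starG_one_mxHL_le (hn : 2 ≤ n) (f : Fin n → ℝ) :
    vp (starG n) 1 (mxHL (starG n) f) ≤ (1 - 1 / (n : ℝ)) * vp (starG n) 1 f := by
  set c : Fin n := ⟨0, by omega⟩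
  have hc : c.val = 0 := rfl
  have hcard : (Finset.univ.erase c).card + 1 = n := by
    rw [Finset.card_erase_of_mem (Finset.mem_univ c), Finset.card_univ, Fintype.card_fin]
    omega
  have hmean : n * ((∑ m, |f m|) / n) = |f c| + ∑ v ∈ Finset.univ.erase c, |f v| := by
    rw [mul_div_cancel₀ _ (by positivity), ← Finset.add_sum_erase _ _ (Finset.mem_univ c)]
  rw [vp_starG_one hc, vp_starG_one hc]
  calc ∑ v ∈ Finset.univ.erase c, |mxHL (starG n) f v - mxHL (starG n) f c|
      = ∑ v ∈ Finset.univ.erase c, |max |f v| (max ((|f v| + |f c|) / 2) ((∑ m, |f m|) / n))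
          - max |f c| ((∑ m, |f m|) / n)| :=
        Finset.sum_congr rfl fun v hv => by
          rw [mxHL_starG_leaf hc f (Finset.ne_of_mem_erase hv), mxHL_starG_center hc]
    _ ≤ (1 - 1 / n) * ∑ v ∈ Finset.univ.erase c, |(|f v| - |f c|)| :=
        sum_abs_leafMax_sub_centerMax_le _ hn hcard _ hmean
    _ ≤ (1 - 1 / n) * ∑ v ∈ Finset.univ.erase c, |f v - f c| := by
        have : 1 / (n : ℝ) ≤ 1 := by
          rw [div_le_one (by positivity)]; exact_mod_cast (by omega : 1 ≤ n)
        exact mul_le_mul_of_nonneg_left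
          (Finset.sum_le_sum fun v _ => abs_abs_sub_abs_le_abs_sub _ _) (by linarith)

end starG

/-- sharp bound for the `1`-variation of the Hardy–Littlewood maximal
operator on the star graph `S_n`, `n ≥ 2`. -/
theorem starGraph_var_sharp_p_eq_one (n : ℕ) (hn : 2 ≤ n) :
    (∀ f : Fin n → ℝ,
        vp (starG n) 1 (mxHL (starG n) f) ≤ (1 - 1 / (n : ℝ)) * vp (starG n) 1 f) ∧
    (0 < vp (starG n) 1 (fun v => if v = ⟨1, by omega⟩ then (1 : ℝ) else 0) ∧
      vp (starG n) 1
          (mxHL (starG n) (fun v => if v = ⟨1, by omega⟩ then (1 : ℝ) else 0)) =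
        (1 - 1 / (n : ℝ)) *
          vp (starG n) 1 (fun v => if v = ⟨1, by omega⟩ then (1 : ℝ) else 0)) ∧
    sSup {c : ℝ | ∃ f : Fin n → ℝ, 0 < vp (starG n) 1 f ∧
        c = vp (starG n) 1 (mxHL (starG n) f) / vp (starG n) 1 f} = 1 - 1 / (n : ℝ) := by
  have hleaf : (⟨1, by omega⟩ : Fin n) ≠ ⟨0, by omega⟩ := by simp
  have hδ := vp_starG_one_delta (c := ⟨0, by omega⟩) rfl hleaf
  have hMδ := vp_starG_one_mxHL_delta (c := ⟨0, by omega⟩) rfl hleaf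
  refine ⟨vp_starG_one_mxHL_le hn, ⟨by rw [hδ]; norm_num, by rw [hδ, hMδ, mul_one]⟩, ?_⟩
  refine IsGreatest.csSup_eq ⟨⟨_, by rw [hδ]; norm_num, by rw [hδ, hMδ, div_one]⟩, ?_⟩
  rintro _ ⟨f, hf, rfl⟩
  exact (div_le_iff₀ hf).2 (vp_starG_one_mxHL_le hn f)
end
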